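/- Let λ be a nonzero complex number, β ∈ ℂ[y], and let g ∈ ℂ[y] be nonzero. Then the quotient space Ω(λ,β)/R_g, regarded as a module over the polynomial ring ℂ[z] in which z acts as the operator induced by L₀, is a free module of rank 2·deg g. Moreover, if β(0) ≠ 0, then every maximal submodule of Ω(λ,β) equals R_g for some g ∈ ℂ[y] of degree 1. -/

import Mathlib

open Polynomial

noncomputable section

/-- `ℂ[x,y]`, realized as polynomials in an outer variable `x` (= `X`) with coefficients in
`ℂ[y]`; the inner variable `y` is `C X`.  The same type also models `ℂ[s,t]`. -/
abbrev P2 : Type := Polynomial (Polynomial ℂ)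

/-- the polynomial `x` -/
def xP : P2 := Polynomial.X

/-- the polynomial `y` -/
def yP : P2 := Polynomial.C Polynomial.X

/-- multiplication by a fixed polynomial, as a `ℂ`-linear operator on `ℂ[x,y]` -/
def mulOp (a : P2) : P2 →ₗ[ℂ] P2 := LinearMap.mulLeft ℂ a

/-- the substitution `f(x,y) ↦ f(x+c,y)`, as a `ℂ`-linear operator on `ℂ[x,y]` -/
def shiftOp (c : ℂ) : P2 →ₗ[ℂ] P2 :=
  (Polynomial.taylor (Polynomial.C c)).restrictScalars ℂ

/-- `f(x,y) ↦ λ^m (x + m β(y)) f(x+m, y)` -/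
def genL (lam : ℂ) (β : Polynomial ℂ) (m : ℤ) : P2 →ₗ[ℂ] P2 :=
  lam ^ m • (mulOp (xP + Polynomial.C ((m : ℂ) • β)) ∘ₗ shiftOp (m : ℂ))

/-- `f(x,y) ↦ λ^m y f(x+m, y)` -/
def genH (lam : ℂ) (m : ℤ) : P2 →ₗ[ℂ] P2 :=
  lam ^ m • (mulOp yP ∘ₗ shiftOp (m : ℂ))

/- In everything that follows, the odd (half-integer) index `p ∈ ℤ + 1/2` is encoded by the
integer `k : ℤ` with `p = k + 1/2`. -/

/-- `L_m` on the even part `ℂ[x,y]` of `Ω(λ,β)` -/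
def omegaLe (lam : ℂ) (β : Polynomial ℂ) (m : ℤ) : P2 →ₗ[ℂ] P2 := genL lam β m

/-- `L_m` on the odd part `ℂ[s,t]` of `Ω(λ,β)` -/
def omegaLo (lam : ℂ) (β : Polynomial ℂ) (m : ℤ) : P2 →ₗ[ℂ] P2 :=
  genL lam (β + Polynomial.C (1/2)) m

/-- `H_m` on either part of `Ω(λ,β)` -/
def omegaH (lam : ℂ) (m : ℤ) : P2 →ₗ[ℂ] P2 := genH lam m

/-- `G_{k+1/2} : M₀ → M₁`, `f(x,y) ↦ λ^{p-1/2} f(s+p,t)` -/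
def omegaGe (lam : ℂ) (k : ℤ) : P2 →ₗ[ℂ] P2 := lam ^ k • shiftOp ((k : ℂ) + 1/2)

/-- `G_{k+1/2} : M₁ → M₀`, `f(s,t) ↦ λ^{p+1/2} (x + 2p β(y)) f(x+p,y)` -/
def omegaGo (lam : ℂ) (β : Polynomial ℂ) (k : ℤ) : P2 →ₗ[ℂ] P2 :=
  lam ^ (k + 1) • (mulOp (xP + Polynomial.C (((2*k+1 : ℤ) : ℂ) • β)) ∘ₗ shiftOp ((k : ℂ) + 1/2))

/-- `Q_{k+1/2} : M₀ → M₁` is the zero map -/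
def omegaQe (_k : ℤ) : P2 →ₗ[ℂ] P2 := 0

/-- `Q_{k+1/2} : M₁ → M₀`, `f(s,t) ↦ λ^{p+1/2} y f(x+p,y)` -/
def omegaQo (lam : ℂ) (k : ℤ) : P2 →ₗ[ℂ] P2 :=
  lam ^ (k + 1) • (mulOp yP ∘ₗ shiftOp ((k : ℂ) + 1/2))

/-- A representation of the N=1 Heisenberg-Virasoro superalgebra `𝔤` on the `ℤ₂`-graded
complex vector space `M₀ ⊕ M₁`: operators `Le m`/`Lo m` (resp. `He`/`Ho`) are the even/odd
components of `L_m` (resp. `H_m`), and `Ge k`/`Go k` (resp. `Qe`/`Qo`) are the two components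
of the grading-reversing operator `G_{k+1/2}` (resp. `Q_{k+1/2}`); all ten super-bracket
relations are required to hold on both graded components. -/
structure GRep (M₀ M₁ : Type*) [AddCommGroup M₀] [Module ℂ M₀]
    [AddCommGroup M₁] [Module ℂ M₁] where
  Le : ℤ → M₀ →ₗ[ℂ] M₀
  Lo : ℤ → M₁ →ₗ[ℂ] M₁
  He : ℤ → M₀ →ₗ[ℂ] M₀
  Ho : ℤ → M₁ →ₗ[ℂ] M₁
  Ge : ℤ → M₀ →ₗ[ℂ] M₁
  Go : ℤ → M₁ →ₗ[ℂ] M₀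
  Qe : ℤ → M₀ →ₗ[ℂ] M₁
  Qo : ℤ → M₁ →ₗ[ℂ] M₀
  rel_LL_e : ∀ m n : ℤ, Le m ∘ₗ Le n - Le n ∘ₗ Le m = ((m : ℂ) - (n : ℂ)) • Le (m + n)
  rel_LL_o : ∀ m n : ℤ, Lo m ∘ₗ Lo n - Lo n ∘ₗ Lo m = ((m : ℂ) - (n : ℂ)) • Lo (m + n)
  rel_LH_e : ∀ m n : ℤ, Le m ∘ₗ He n - He n ∘ₗ Le m = (-(n : ℂ)) • He (m + n)
  rel_LH_o : ∀ m n : ℤ, Lo m ∘ₗ Ho n - Ho n ∘ₗ Lo m = (-(n : ℂ)) • Ho (m + n)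
  rel_LG_e : ∀ (m k : ℤ),
    Lo m ∘ₗ Ge k - Ge k ∘ₗ Le m = ((m : ℂ)/2 - ((k : ℂ) + 1/2)) • Ge (m + k)
  rel_LG_o : ∀ (m k : ℤ),
    Le m ∘ₗ Go k - Go k ∘ₗ Lo m = ((m : ℂ)/2 - ((k : ℂ) + 1/2)) • Go (m + k)
  rel_LQ_e : ∀ (m k : ℤ),
    Lo m ∘ₗ Qe k - Qe k ∘ₗ Le m = (-((m : ℂ)/2 + ((k : ℂ) + 1/2))) • Qe (m + k)
  rel_LQ_o : ∀ (m k : ℤ),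
    Le m ∘ₗ Qo k - Qo k ∘ₗ Lo m = (-((m : ℂ)/2 + ((k : ℂ) + 1/2))) • Qo (m + k)
  rel_HG_e : ∀ (m k : ℤ), Ho m ∘ₗ Ge k - Ge k ∘ₗ He m = (m : ℂ) • Qe (m + k)
  rel_HG_o : ∀ (m k : ℤ), He m ∘ₗ Go k - Go k ∘ₗ Ho m = (m : ℂ) • Qo (m + k)
  rel_GG_e : ∀ k l : ℤ, Go k ∘ₗ Ge l + Go l ∘ₗ Ge k = (2 : ℂ) • Le (k + l + 1)
  rel_GG_o : ∀ k l : ℤ, Ge k ∘ₗ Go l + Ge l ∘ₗ Go k = (2 : ℂ) • Lo (k + l + 1)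
  rel_GQ_e : ∀ k l : ℤ, Go k ∘ₗ Qe l + Qo l ∘ₗ Ge k = He (k + l + 1)
  rel_GQ_o : ∀ k l : ℤ, Ge k ∘ₗ Qo l + Qe l ∘ₗ Go k = Ho (k + l + 1)
  rel_HH_e : ∀ m n : ℤ, He m ∘ₗ He n = He n ∘ₗ He m
  rel_HH_o : ∀ m n : ℤ, Ho m ∘ₗ Ho n = Ho n ∘ₗ Ho m
  rel_HQ_e : ∀ (m k : ℤ), Ho m ∘ₗ Qe k = Qe k ∘ₗ He m
  rel_HQ_o : ∀ (m k : ℤ), He m ∘ₗ Qo k = Qo k ∘ₗ Ho m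
  rel_QQ_e : ∀ k l : ℤ, Qo k ∘ₗ Qe l + Qo l ∘ₗ Qe k = 0
  rel_QQ_o : ∀ k l : ℤ, Qe k ∘ₗ Qo l + Qe l ∘ₗ Qo k = 0

/-- evaluation of a two-variable polynomial (an element of `P2`, outer variable ↦ `A`,
inner variable ↦ `B`) at a pair of commuting operators -/
def eval2End {V : Type*} [AddCommGroup V] [Module ℂ V] (A B : Module.End ℂ V)
    (f : P2) : Module.End ℂ V :=
  Polynomial.eval₂ (Polynomial.aeval B).toRingHom A f

/-- multiplication by a fixed polynomial on `ℂ[x]` -/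
def mul1 (a : Polynomial ℂ) : Polynomial ℂ →ₗ[ℂ] Polynomial ℂ := LinearMap.mulLeft ℂ a

/-- the substitution `f(x) ↦ f(x+c)` on `ℂ[x]` -/
def tay (c : ℂ) : Polynomial ℂ →ₗ[ℂ] Polynomial ℂ := Polynomial.taylor c

/-- `f(x) ↦ λ^m (x + m c) f(x+m)` -/
def phiL (lam c : ℂ) (m : ℤ) : Polynomial ℂ →ₗ[ℂ] Polynomial ℂ :=
  lam ^ m • (mul1 (Polynomial.X + Polynomial.C ((m : ℂ) * c)) ∘ₗ tay (m : ℂ))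

/-- `f(x) ↦ λ^m b f(x+m)` -/
def phiH (lam b : ℂ) (m : ℤ) : Polynomial ℂ →ₗ[ℂ] Polynomial ℂ :=
  (lam ^ m * b) • tay (m : ℂ)

/-- `f(x) ↦ λ^{p-1/2} f(s+p)`, `p = k + 1/2` -/
def phiGe (lam : ℂ) (k : ℤ) : Polynomial ℂ →ₗ[ℂ] Polynomial ℂ :=
  lam ^ k • tay ((k : ℂ) + 1/2)

/-- `f(s) ↦ λ^{p+1/2} (x + 2 p c) f(x+p)`, `p = k + 1/2` -/
def phiGo (lam c : ℂ) (k : ℤ) : Polynomial ℂ →ₗ[ℂ] Polynomial ℂ :=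
  lam ^ (k + 1) • (mul1 (Polynomial.X + Polynomial.C (((2*k+1 : ℤ) : ℂ) * c)) ∘ₗ tay ((k : ℂ) + 1/2))

/-- `f(s) ↦ λ^{p+1/2} b f(x+p)`, `p = k + 1/2` -/
def phiQo (lam b : ℂ) (k : ℤ) : Polynomial ℂ →ₗ[ℂ] Polynomial ℂ :=
  (lam ^ (k + 1) * b) • tay ((k : ℂ) + 1/2)

/-- one graded component of `R_g`, i.e. `g(y)ℂ[x,y]` (equivalently `g(t)ℂ[s,t]`) -/
def Rg (g : Polynomial ℂ) : Submodule ℂ P2 := LinearMap.range (mulOp (Polynomial.C g))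

/-- the even component of `S_g`, i.e. `g(y)(xℂ[x,y] + yℂ[x,y])` -/
def Sg (g : Polynomial ℂ) : Submodule ℂ P2 :=
  LinearMap.range (mulOp (xP * Polynomial.C g)) ⊔ LinearMap.range (mulOp (yP * Polynomial.C g))

/-- the embedding `ℂ[x] → ℂ[x,y]` -/
def embX (f : Polynomial ℂ) : P2 := f.map Polynomial.C

/-- `f(x) ↦` class of `g'(y)·f(x)` in `ℂ[x,y]/R_g` -/
def psiMap (g g' : Polynomial ℂ) (f : Polynomial ℂ) : P2 ⧸ Rg g :=
  (Rg g).mkQ (Polynomial.C g' * embX f)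


/-- `F₀ ⊕ F₁` is a (graded) submodule of `Ω(λ,β)`: it is invariant under all the operators
`L_m`, `H_m`, `G_p`, `Q_p`. -/
def IsOmegaSub (lam : ℂ) (β : Polynomial ℂ) (F₀ F₁ : Submodule ℂ P2) : Prop :=
  (∀ m : ℤ, ∀ f ∈ F₀, omegaLe lam β m f ∈ F₀) ∧
  (∀ m : ℤ, ∀ f ∈ F₁, omegaLo lam β m f ∈ F₁) ∧
  (∀ m : ℤ, ∀ f ∈ F₀, omegaH lam m f ∈ F₀) ∧
  (∀ m : ℤ, ∀ f ∈ F₁, omegaH lam m f ∈ F₁) ∧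
  (∀ k : ℤ, ∀ f ∈ F₀, omegaGe lam k f ∈ F₁) ∧
  (∀ k : ℤ, ∀ f ∈ F₁, omegaGo lam β k f ∈ F₀) ∧
  (∀ k : ℤ, ∀ f ∈ F₀, omegaQe k f ∈ F₁) ∧
  (∀ k : ℤ, ∀ f ∈ F₁, omegaQo lam k f ∈ F₀)

lemma shiftOp_apply (c : ℂ) (f : P2) : shiftOp c f = taylor (C c) f := rfl
lemma mulOp_apply (a f : P2) : mulOp a f = a * f := rfl

lemma mem_Rg {g : Polynomial ℂ} {f : P2} : f ∈ Rg g ↔ ∃ q, C g * q = f := by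
  simp [Rg, LinearMap.mem_range, mulOp_apply]

lemma mem_Rg_iff_dvd {g : Polynomial ℂ} {f : P2} : f ∈ Rg g ↔ ∀ i, g ∣ f.coeff i := by
  rw [mem_Rg]
  constructor
  · rintro ⟨q, rfl⟩ i; rw [coeff_C_mul]; exact Dvd.intro _ rfl
  · intro h
    refine ⟨f.sum fun i a => C (Classical.choose (h i)) * X ^ i, ?_⟩
    conv_rhs => rw [← sum_C_mul_X_pow_eq f]
    rw [Polynomial.sum_def, Polynomial.sum_def, Finset.mul_sum]
    refine Finset.sum_congr rfl fun i _ => ?_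
    rw [← mul_assoc, ← map_mul, ← Classical.choose_spec (h i)]

lemma Rg_taylor {g : Polynomial ℂ} {f : P2} (c : Polynomial ℂ) (hf : f ∈ Rg g) :
    taylor c f ∈ Rg g := by
  obtain ⟨q, rfl⟩ := mem_Rg.1 hf
  exact mem_Rg.2 ⟨taylor c q, by rw [taylor_mul, taylor_C]⟩

lemma Rg_mem_of_taylor {g : Polynomial ℂ} {f : P2} (c : Polynomial ℂ)
    (hf : taylor c f ∈ Rg g) : f ∈ Rg g := by
  have := Rg_taylor (-c) hf
  rwa [taylor_taylor, neg_add_cancel, taylor_zero] at this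

lemma Rg_smul_unit {g : Polynomial ℂ} (c : ℂ) (hc : c ≠ 0) : Rg g = Rg (g * C c) := by
  ext f
  simp only [mem_Rg_iff_dvd]
  constructor
  · intro h i
    obtain ⟨q, hq⟩ := h i
    have h1 : (C c : Polynomial ℂ) * C c⁻¹ = 1 := by rw [← C_mul, mul_inv_cancel₀ hc, C_1]
    exact ⟨C c⁻¹ * q, by rw [hq]; linear_combination (-(g * q)) * h1⟩
  · intro h i
    obtain ⟨q, hq⟩ := h i
    exact ⟨C c * q, by rw [hq]; ring⟩
-- ### generic polynomial helper lemmas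

lemma csmul (c : ℂ) (f : P2) : c • f = Polynomial.C (Polynomial.C c) * f := by
  rw [← smul_eq_C_mul]
  rw [show (Polynomial.C c : Polynomial ℂ) = algebraMap ℂ (Polynomial ℂ) c from rfl]
  rw [algebraMap_smul]

lemma taylor_coeff_natDegree' (r : Polynomial ℂ) (f : P2) :
    (taylor r f).coeff f.natDegree = f.leadingCoeff := by
  conv_lhs => rw [show f.natDegree = (taylor r f).natDegree from (natDegree_taylor f r).symm]
  rw [coeff_natDegree, taylor_apply, leadingCoeff_comp (by rw [natDegree_X_add_C]; exact one_ne_zero),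
    Monic.leadingCoeff (monic_X_add_C r), one_pow, mul_one]

lemma taylor_one_coeff_pred {f : P2} {m : ℕ} (hm : 1 ≤ m) (hdeg : f.natDegree ≤ m) :
    (taylor (1 : Polynomial ℂ) f).coeff (m - 1)
      = f.coeff (m - 1) + (m : Polynomial ℂ) * f.coeff m := by
  rw [taylor_coeff]
  have hdh : (hasseDeriv (m - 1) f).natDegree ≤ 1 := by
    rw [natDegree_hasseDeriv]; omega
  conv_lhs => rw [eq_X_add_C_of_natDegree_le_one hdh]
  rw [eval_add, eval_mul, eval_C, eval_C, eval_X, mul_one, hasseDeriv_coeff, hasseDeriv_coeff]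
  have h1 : 1 + (m - 1) = m := by omega
  have h0 : 0 + (m - 1) = m - 1 := by omega
  rw [h1, h0, Nat.choose_self, Nat.cast_one, one_mul]
  have hch : m.choose (m - 1) = m := by
    rw [Nat.choose_symm hm, Nat.choose_one_right]
  rw [hch, add_comm]

lemma taylor_one_fixed {f : P2} (h : taylor (1 : Polynomial ℂ) f = f) : f.natDegree = 0 := by
  have hn : ∀ n : ℕ, taylor (n : Polynomial ℂ) f = f := by
    intro n
    induction n with
    | zero => simpa using taylor_zero f
    | succ n ih =>
      have : taylor (1 : Polynomial ℂ) (taylor (n : Polynomial ℂ) f) = f := by rw [ih, h]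
      rwa [taylor_taylor, show (1 : Polynomial ℂ) + n = ((n+1 : ℕ) : Polynomial ℂ) by push_cast; ring] at this
  have hev : ∀ n : ℕ, f.eval ((n : Polynomial ℂ)) = f.eval 0 := by
    intro n
    conv_rhs => rw [← hn n]
    rw [taylor_eval, zero_add]
  have hF : f - C (f.eval 0) = 0 := by
    apply Polynomial.eq_zero_of_infinite_isRoot
    apply Set.infinite_of_injective_forall_mem (f := fun n : ℕ => (n : Polynomial ℂ))
    · exact Nat.cast_injective
    · intro n
      simp only [Set.mem_setOf_eq, IsRoot, eval_sub, eval_C, hev n, sub_self]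
  rw [sub_eq_zero.1 hF, natDegree_C]

lemma natDegree_lt_of_coeff_zero {p : P2} {m : ℕ} (hm : 1 ≤ m) (hle : p.natDegree ≤ m)
    (hc : p.coeff m = 0) : p.natDegree < m := by
  rcases eq_or_ne p 0 with rfl | hp
  · simpa using (show 0 < m by omega)
  · rcases lt_or_eq_of_le hle with h | h
    · exact h
    · exfalso
      apply hp
      rw [← leadingCoeff_eq_zero, ← coeff_natDegree, h, hc]
-- ### membership lemmas for submodules of Ω(λ,β)

section Sub
variable {lam : ℂ} {β : Polynomial ℂ} {F₀ F₁ : Submodule ℂ P2}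

lemma mem_mulX₀ (hs : IsOmegaSub lam β F₀ F₁) (hlam : lam ≠ 0) {f : P2} (hf : f ∈ F₀) :
    xP * f ∈ F₀ := by
  have h := hs.1 0 f hf
  have he : omegaLe lam β 0 f = lam ^ (0:ℤ) • (xP * f) := by
    simp [omegaLe, genL, mulOp, shiftOp_apply, taylor_zero, LinearMap.mulLeft_apply]
  rw [he, Submodule.smul_mem_iff _ (zpow_ne_zero _ hlam)] at h
  exact h

lemma mem_mulX₁ (hs : IsOmegaSub lam β F₀ F₁) (hlam : lam ≠ 0) {f : P2} (hf : f ∈ F₁) :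
    xP * f ∈ F₁ := by
  have h := hs.2.1 0 f hf
  have he : omegaLo lam β 0 f = lam ^ (0:ℤ) • (xP * f) := by
    simp [omegaLo, genL, mulOp, shiftOp_apply, taylor_zero, LinearMap.mulLeft_apply]
  rw [he, Submodule.smul_mem_iff _ (zpow_ne_zero _ hlam)] at h
  exact h

lemma mem_mulY₀ (hs : IsOmegaSub lam β F₀ F₁) (hlam : lam ≠ 0) {f : P2} (hf : f ∈ F₀) :
    yP * f ∈ F₀ := by
  have h := hs.2.2.1 0 f hf
  have he : omegaH lam 0 f = lam ^ (0:ℤ) • (yP * f) := by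
    simp [omegaH, genH, mulOp, shiftOp_apply, taylor_zero, LinearMap.mulLeft_apply]
  rw [he, Submodule.smul_mem_iff _ (zpow_ne_zero _ hlam)] at h
  exact h

lemma mem_mulY₁ (hs : IsOmegaSub lam β F₀ F₁) (hlam : lam ≠ 0) {f : P2} (hf : f ∈ F₁) :
    yP * f ∈ F₁ := by
  have h := hs.2.2.2.1 0 f hf
  have he : omegaH lam 0 f = lam ^ (0:ℤ) • (yP * f) := by
    simp [omegaH, genH, mulOp, shiftOp_apply, taylor_zero, LinearMap.mulLeft_apply]
  rw [he, Submodule.smul_mem_iff _ (zpow_ne_zero _ hlam)] at h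
  exact h

lemma mem_Ge (hs : IsOmegaSub lam β F₀ F₁) (hlam : lam ≠ 0) (k : ℤ) {f : P2} (hf : f ∈ F₀) :
    taylor (Polynomial.C ((k : ℂ) + 1/2)) f ∈ F₁ := by
  have h := hs.2.2.2.2.1 k f hf
  have he : omegaGe lam k f = lam ^ k • taylor (Polynomial.C ((k : ℂ) + 1/2)) f := by
    simp [omegaGe, shiftOp_apply]
  rw [he, Submodule.smul_mem_iff _ (zpow_ne_zero _ hlam)] at h
  exact h

lemma mem_Go (hs : IsOmegaSub lam β F₀ F₁) (hlam : lam ≠ 0) (k : ℤ) {f : P2} (hf : f ∈ F₁) :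
    (xP + Polynomial.C (((2*k+1 : ℤ) : ℂ) • β)) * taylor (Polynomial.C ((k : ℂ) + 1/2)) f ∈ F₀ := by
  have h := hs.2.2.2.2.2.1 k f hf
  have he : omegaGo lam β k f
      = lam ^ (k+1) • ((xP + Polynomial.C (((2*k+1 : ℤ) : ℂ) • β)) * taylor (Polynomial.C ((k : ℂ) + 1/2)) f) := by
    simp [omegaGo, mulOp, shiftOp_apply, LinearMap.mulLeft_apply]
  rw [he, Submodule.smul_mem_iff _ (zpow_ne_zero _ hlam)] at h
  exact h

lemma mem_Qo (hs : IsOmegaSub lam β F₀ F₁) (hlam : lam ≠ 0) (k : ℤ) {f : P2} (hf : f ∈ F₁) :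
    yP * taylor (Polynomial.C ((k : ℂ) + 1/2)) f ∈ F₀ := by
  have h := hs.2.2.2.2.2.2.2 k f hf
  have he : omegaQo lam k f = lam ^ (k+1) • (yP * taylor (Polynomial.C ((k : ℂ) + 1/2)) f) := by
    simp [omegaQo, mulOp, shiftOp_apply, LinearMap.mulLeft_apply]
  rw [he, Submodule.smul_mem_iff _ (zpow_ne_zero _ hlam)] at h
  exact h

/-- a `ℂ`-submodule closed under multiplication by `x` and `y` is an ideal -/
lemma mul_closure {S : Submodule ℂ P2} (hx : ∀ f ∈ S, xP * f ∈ S) (hy : ∀ f ∈ S, yP * f ∈ S)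
    (q : P2) {f : P2} (hf : f ∈ S) : q * f ∈ S := by
  have hXn : ∀ (n : ℕ) (f : P2), f ∈ S → (Polynomial.X : P2) ^ n * f ∈ S := by
    intro n
    induction n with
    | zero => intro f hf; simpa using hf
    | succ n ih =>
      intro f hf
      have := hx _ (ih f hf)
      rw [xP] at this
      rw [pow_succ]
      convert this using 1
      ring
  have hYn : ∀ (n : ℕ) (f : P2), f ∈ S → yP ^ n * f ∈ S := by
    intro n
    induction n with
    | zero => intro f hf; simpa using hf
    | succ n ih =>
      intro f hf
      have := hy _ (ih f hf)
      rw [pow_succ]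
      convert this using 1
      ring
  have hCy : ∀ (a : Polynomial ℂ) (f : P2), f ∈ S → Polynomial.C a * f ∈ S := by
    intro a
    induction a using Polynomial.induction_on' with
    | add p q hp hq =>
      intro f hf
      rw [map_add, add_mul]
      exact S.add_mem (hp f hf) (hq f hf)
    | monomial n a =>
      intro f hf
      rw [← Polynomial.C_mul_X_pow_eq_monomial, map_mul, map_pow, mul_assoc, ← yP, ← csmul]
      exact S.smul_mem _ (hYn n f hf)
  induction q using Polynomial.induction_on' with
  | add p q hp hq =>
    rw [add_mul]
    exact S.add_mem hp hq
  | monomial n a =>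
    rw [← Polynomial.C_mul_X_pow_eq_monomial, mul_assoc]
    exact hCy a _ (hXn n f hf)
end Sub
section Sub2
variable {lam : ℂ} {β : Polynomial ℂ} {F₀ F₁ : Submodule ℂ P2}

lemma shift1_mem (hs : IsOmegaSub lam β F₀ F₁) (hlam : lam ≠ 0) (hβ0 : β.eval 0 ≠ 0)
    {f : P2} (hf : f ∈ F₀) : taylor (1 : Polynomial ℂ) f ∈ F₀ := by
  have hv : taylor (Polynomial.C (1/2 : ℂ)) f ∈ F₁ := by
    have h := mem_Ge hs hlam 0 hf
    norm_num at h
    exact h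
  have hv' : taylor (Polynomial.C (-(1/2) : ℂ)) f ∈ F₁ := by
    have h := mem_Ge hs hlam (-1) hf
    norm_num at h
    rw [show Polynomial.C (-(1/2):ℂ) = -Polynomial.C (1/2:ℂ) from map_neg _ _]
    exact h
  have hA1 : (xP + Polynomial.C β) * taylor (1 : Polynomial ℂ) f ∈ F₀ := by
    have h := mem_Go hs hlam 0 hv
    rw [taylor_taylor, ← map_add] at h
    norm_num at h
    exact h
  have hA2 : (xP + Polynomial.C ((3:ℂ) • β)) * taylor (1 : Polynomial ℂ) f ∈ F₀ := by
    have h := mem_Go hs hlam 1 hv'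
    rw [taylor_taylor, ← map_add] at h
    norm_num at h
    exact h
  have hB : yP * taylor (1 : Polynomial ℂ) f ∈ F₀ := by
    have h := mem_Qo hs hlam 0 hv
    rw [taylor_taylor, ← map_add] at h
    norm_num at h
    exact h
  set w := taylor (1 : Polynomial ℂ) f with hw
  have hCβ : Polynomial.C β * w ∈ F₀ := by
    have h := F₀.smul_mem ((2:ℂ)⁻¹) (F₀.sub_mem hA2 hA1)
    have h3 : Polynomial.C ((3:ℂ) • β) = 3 * Polynomial.C β := by
      rw [smul_eq_C_mul, map_mul]
      simp [map_ofNat]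
    rw [h3] at h
    have hx : (xP + 3 * Polynomial.C β) * w - (xP + Polynomial.C β) * w
        = 2 * (Polynomial.C β * w) := by ring
    rw [hx] at h
    have h2 : (2 : P2) * (Polynomial.C β * w) = (2:ℂ) • (Polynomial.C β * w) := by
      rw [csmul]; simp [map_ofNat]
    rw [h2, smul_smul] at h
    norm_num at h
    exact h
  have hyd : Polynomial.C β.divX * (yP * w) ∈ F₀ :=
    mul_closure (fun f hf => mem_mulX₀ hs hlam hf) (fun f hf => mem_mulY₀ hs hlam hf) _ hB
  have hb0 : (β.coeff 0) • w ∈ F₀ := by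
    have h := F₀.sub_mem hCβ hyd
    have e : Polynomial.C β * w - Polynomial.C β.divX * (yP * w) = (β.coeff 0) • w := by
      rw [csmul, yP, ← mul_assoc, ← map_mul, ← sub_mul, ← map_sub]
      congr 1
      congr 1
      linear_combination (-1 : Polynomial ℂ) * Polynomial.X_mul_divX_add β
    rwa [e] at h
  rw [Submodule.smul_mem_iff _ (by rwa [Polynomial.coeff_zero_eq_eval_zero])] at hb0
  exact hb0

end Sub2
section Sub3
variable {lam : ℂ} {β : Polynomial ℂ} {F₀ F₁ : Submodule ℂ P2}

lemma coeff_mem (hs : IsOmegaSub lam β F₀ F₁) (hlam : lam ≠ 0) (hβ0 : β.eval 0 ≠ 0) :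
    ∀ (n : ℕ) (f : P2), f ∈ F₀ → f.natDegree ≤ n → ∀ i, Polynomial.C (f.coeff i) ∈ F₀ := by
  intro n
  induction n using Nat.strong_induction_on with
  | _ n IH =>
  intro f hf hdeg i
  rcases eq_or_ne f 0 with rfl | hf0
  · simp only [Polynomial.coeff_zero, map_zero]; exact F₀.zero_mem
  rcases Nat.eq_zero_or_pos f.natDegree with hd | hd
  · rcases eq_or_ne i 0 with rfl | hi
    · rwa [← Polynomial.eq_C_of_natDegree_eq_zero hd]
    · rw [Polynomial.coeff_eq_zero_of_natDegree_lt (by omega), map_zero]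
      exact F₀.zero_mem
  · set m := f.natDegree with hm
    have hΔmem : taylor (1 : Polynomial ℂ) f - f ∈ F₀ :=
      F₀.sub_mem (shift1_mem hs hlam hβ0 hf) hf
    have hcm : (taylor (1 : Polynomial ℂ) f - f).coeff m = 0 := by
      rw [Polynomial.coeff_sub, hm, taylor_coeff_natDegree', Polynomial.coeff_natDegree, sub_self]
    have hdegΔ : (taylor (1 : Polynomial ℂ) f - f).natDegree < m := by
      apply natDegree_lt_of_coeff_zero hd _ hcm
      exact le_trans (Polynomial.natDegree_sub_le _ _) (by rw [natDegree_taylor]; omega)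
    -- leading coefficient lies in J
    have hlead : Polynomial.C (f.coeff m) ∈ F₀ := by
      have h1 := IH _ (lt_of_lt_of_le hdegΔ hdeg) _ hΔmem le_rfl (m - 1)
      rw [Polynomial.coeff_sub, taylor_one_coeff_pred hd le_rfl, add_sub_cancel_left] at h1
      have e : ((m : Polynomial ℂ) * f.coeff m) = (m : ℂ) • f.coeff m := by
        rw [smul_eq_C_mul]; norm_cast
      rw [e, ← Polynomial.smul_C] at h1
      rwa [Submodule.smul_mem_iff _ (Nat.cast_ne_zero.2 (by omega) : (m:ℂ) ≠ 0)] at h1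
    have hmon : Polynomial.C (f.coeff m) * Polynomial.X ^ m ∈ F₀ := by
      have := mul_closure (fun f hf => mem_mulX₀ hs hlam hf) (fun f hf => mem_mulY₀ hs hlam hf)
        (Polynomial.X ^ m) hlead
      rwa [mul_comm] at this
    have hf' : f - Polynomial.C (f.coeff m) * Polynomial.X ^ m ∈ F₀ := F₀.sub_mem hf hmon
    have hdegf' : (f - Polynomial.C (f.coeff m) * Polynomial.X ^ m).natDegree < m := by
      apply natDegree_lt_of_coeff_zero hd
      · refine le_trans (Polynomial.natDegree_sub_le _ _) ?_
        simp only [sup_le_iff]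
        exact ⟨le_rfl, le_trans (Polynomial.natDegree_C_mul_le _ _) (by rw [Polynomial.natDegree_X_pow])⟩
      · rw [Polynomial.coeff_sub, Polynomial.coeff_C_mul, Polynomial.coeff_X_pow, if_pos rfl,
          mul_one, sub_self]
    have h2 := IH _ (lt_of_lt_of_le hdegf' hdeg) _ hf' le_rfl i
    rw [Polynomial.coeff_sub, Polynomial.coeff_C_mul, Polynomial.coeff_X_pow, map_sub, map_mul] at h2
    rcases eq_or_ne i m with rfl | him
    · simpa using hlead
    · rw [if_neg him] at h2
      simpa using h2
end Sub3
-- ### operator application lemmas and facts about `Rg`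

lemma omegaLe_apply (lam : ℂ) (β : Polynomial ℂ) (m : ℤ) (f : P2) :
    omegaLe lam β m f
      = lam ^ m • ((xP + Polynomial.C (((m:ℤ):ℂ) • β)) * taylor (Polynomial.C ((m:ℤ):ℂ)) f) := by
  simp [omegaLe, genL, mulOp, shiftOp, LinearMap.mulLeft_apply]

lemma omegaLo_apply (lam : ℂ) (β : Polynomial ℂ) (m : ℤ) (f : P2) :
    omegaLo lam β m f
      = lam ^ m • ((xP + Polynomial.C (((m:ℤ):ℂ) • (β + Polynomial.C (1/2))))
          * taylor (Polynomial.C ((m:ℤ):ℂ)) f) := by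
  simp [omegaLo, genL, mulOp, shiftOp, LinearMap.mulLeft_apply]

lemma omegaH_apply (lam : ℂ) (m : ℤ) (f : P2) :
    omegaH lam m f = lam ^ m • (yP * taylor (Polynomial.C ((m:ℤ):ℂ)) f) := by
  simp [omegaH, genH, mulOp, shiftOp, LinearMap.mulLeft_apply]

lemma omegaGe_apply (lam : ℂ) (k : ℤ) (f : P2) :
    omegaGe lam k f = lam ^ k • taylor (Polynomial.C ((k:ℂ) + 1/2)) f := by
  simp [omegaGe, shiftOp]

lemma omegaGo_apply (lam : ℂ) (β : Polynomial ℂ) (k : ℤ) (f : P2) :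
    omegaGo lam β k f
      = lam ^ (k+1) • ((xP + Polynomial.C (((2*k+1 : ℤ) : ℂ) • β))
          * taylor (Polynomial.C ((k:ℂ) + 1/2)) f) := by
  simp [omegaGo, mulOp, shiftOp, LinearMap.mulLeft_apply]

lemma omegaQo_apply (lam : ℂ) (k : ℤ) (f : P2) :
    omegaQo lam k f = lam ^ (k+1) • (yP * taylor (Polynomial.C ((k:ℂ) + 1/2)) f) := by
  simp [omegaQo, mulOp, shiftOp, LinearMap.mulLeft_apply]

lemma Rg_op_mem (h : Polynomial ℂ) (a : P2) (c : Polynomial ℂ) {f : P2} (hf : f ∈ Rg h) :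
    a * taylor c f ∈ Rg h := by
  obtain ⟨q, rfl⟩ := mem_Rg.1 hf
  rw [taylor_mul, taylor_C]
  exact mem_Rg.2 ⟨a * taylor c q, by ring⟩

lemma isOmegaSub_Rg (lam : ℂ) (β h : Polynomial ℂ) : IsOmegaSub lam β (Rg h) (Rg h) := by
  refine ⟨fun m f hf => ?_, fun m f hf => ?_, fun m f hf => ?_, fun m f hf => ?_,
    fun k f hf => ?_, fun k f hf => ?_, fun k f hf => ?_, fun k f hf => ?_⟩
  · rw [omegaLe_apply]; exact (Rg h).smul_mem _ (Rg_op_mem h _ _ hf)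
  · rw [omegaLo_apply]; exact (Rg h).smul_mem _ (Rg_op_mem h _ _ hf)
  · rw [omegaH_apply]; exact (Rg h).smul_mem _ (Rg_op_mem h _ _ hf)
  · rw [omegaH_apply]; exact (Rg h).smul_mem _ (Rg_op_mem h _ _ hf)
  · rw [omegaGe_apply]
    refine (Rg h).smul_mem _ ?_
    have := Rg_op_mem h 1 (Polynomial.C ((k:ℂ) + 1/2)) hf
    rwa [one_mul] at this
  · rw [omegaGo_apply]; exact (Rg h).smul_mem _ (Rg_op_mem h _ _ hf)
  · show omegaQe k f ∈ Rg h
    rw [omegaQe]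
    exact (Rg h).zero_mem
  · rw [omegaQo_apply]; exact (Rg h).smul_mem _ (Rg_op_mem h _ _ hf)

lemma mem_Rg_lin_iff (a : ℂ) (f : P2) :
    f ∈ Rg (Polynomial.X - Polynomial.C a) ↔ f.map (Polynomial.evalRingHom a) = 0 := by
  rw [mem_Rg_iff_dvd]
  simp only [Polynomial.ext_iff, Polynomial.coeff_map, Polynomial.coeff_zero]
  exact forall_congr' fun i => (Polynomial.dvd_iff_isRoot).trans Iff.rfl

lemma one_not_mem_Rg_lin (a : ℂ) : (1 : P2) ∉ Rg (Polynomial.X - Polynomial.C a) := by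
  rw [mem_Rg_lin_iff]
  intro h
  rw [Polynomial.map_one] at h
  exact one_ne_zero h
lemma part2 (lam : ℂ) (hlam : lam ≠ 0) (β : Polynomial ℂ) (hβ0 : β.eval 0 ≠ 0)
    (F : Submodule ℂ P2 × Submodule ℂ P2)
    (hsub : IsOmegaSub lam β F.1 F.2) (hne : F ≠ ⊤)
    (hmax : ∀ F' : Submodule ℂ P2 × Submodule ℂ P2,
      IsOmegaSub lam β F'.1 F'.2 → F ≤ F' → F' ≠ ⊤ → F' = F) :
    ∃ g' : Polynomial ℂ, g'.natDegree = 1 ∧ F = (Rg g', Rg g') := by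
  classical
  have h1 : (1 : P2) ∉ F.1 := by
    intro h1
    apply hne
    have hF1 : F.1 = ⊤ := by
      rw [Submodule.eq_top_iff']
      intro x
      have := mul_closure (fun f hf => mem_mulX₀ hsub hlam hf)
        (fun f hf => mem_mulY₀ hsub hlam hf) x h1
      rwa [mul_one] at this
    have h1' : (1 : P2) ∈ F.2 := by
      have := mem_Ge hsub hlam 0 h1
      rwa [taylor_one, Polynomial.C_1] at this
    have hF2 : F.2 = ⊤ := by
      rw [Submodule.eq_top_iff']
      intro x
      have := mul_closure (fun f hf => mem_mulX₁ hsub hlam hf)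
        (fun f hf => mem_mulY₁ hsub hlam hf) x h1'
      rwa [mul_one] at this
    exact Prod.ext_iff.2 ⟨hF1, hF2⟩
  -- the ideal of constant (in `x`) polynomials in `F.1`
  set J : Ideal (Polynomial ℂ) :=
    { carrier := {b | Polynomial.C b ∈ F.1}
      add_mem' := fun {x y} hx hy => by
        simp only [Set.mem_setOf_eq, map_add] at *
        exact F.1.add_mem hx hy
      zero_mem' := by
        simp only [Set.mem_setOf_eq, map_zero]
        exact F.1.zero_mem
      smul_mem' := fun c b hb => by
        simp only [Set.mem_setOf_eq, smul_eq_mul, map_mul] at *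
        exact mul_closure (fun f hf => mem_mulX₀ hsub hlam hf)
          (fun f hf => mem_mulY₀ hsub hlam hf) _ hb } with hJ
  have hprin : J.IsPrincipal := IsPrincipalIdealRing.principal J
  set g₀ := Submodule.IsPrincipal.generator J with hg₀
  have hmemJ : ∀ b : Polynomial ℂ, b ∈ J ↔ g₀ ∣ b := by
    intro b
    rw [← Submodule.IsPrincipal.mem_iff_generator_dvd]
  -- find a common root
  obtain ⟨a, ha⟩ : ∃ a : ℂ, ∀ b ∈ J, (Polynomial.X - Polynomial.C a) ∣ b := by
    by_cases hg0 : g₀ = 0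
    · exact ⟨0, fun b hb => by
        have := (hmemJ b).1 hb
        rw [hg0] at this
        rw [zero_dvd_iff.1 this]
        exact dvd_zero _⟩
    · have hunit : ¬ IsUnit g₀ := by
        intro hu
        have : (1 : Polynomial ℂ) ∈ J := (hmemJ 1).2 (isUnit_iff_dvd_one.1 hu)
        have : Polynomial.C (1 : Polynomial ℂ) ∈ F.1 := this
        rw [Polynomial.C_1] at this
        exact h1 this
      have hdeg : 0 < g₀.degree := by
        rcases Nat.eq_zero_or_pos g₀.natDegree with h0 | h0
        · exfalso
          apply hunit
          rw [Polynomial.eq_C_of_natDegree_eq_zero h0]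
          exact Polynomial.isUnit_C.2 (isUnit_iff_ne_zero.2 (by
            intro hc
            apply hg0
            rw [Polynomial.eq_C_of_natDegree_eq_zero h0, hc, map_zero]))
        · exact Polynomial.natDegree_pos_iff_degree_pos.1 h0
      obtain ⟨a, ha⟩ := Complex.exists_root hdeg
      exact ⟨a, fun b hb => dvd_trans (Polynomial.dvd_iff_isRoot.2 ha) ((hmemJ b).1 hb)⟩
  have hF1le : F.1 ≤ Rg (Polynomial.X - Polynomial.C a) := by
    intro f hf
    rw [mem_Rg_iff_dvd]
    intro i
    exact ha _ (coeff_mem hsub hlam hβ0 f.natDegree f hf le_rfl i)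
  have hF2le : F.2 ≤ Rg (Polynomial.X - Polynomial.C a) := by
    intro f hf
    have h := hF1le (mem_Go hsub hlam 0 hf)
    rw [mem_Rg_lin_iff, xP, Polynomial.map_mul, Polynomial.map_add, Polynomial.map_X,
      Polynomial.map_C] at h
    have hne' : (Polynomial.X + Polynomial.C ((Polynomial.evalRingHom a) (((2*(0:ℤ)+1 : ℤ) : ℂ) • β))
        : Polynomial ℂ) ≠ 0 := Polynomial.X_add_C_ne_zero _
    have hM := (mul_eq_zero.1 h).resolve_left hne'
    have : taylor (Polynomial.C ((0:ℤ) + 1/2 : ℂ)) f ∈ Rg (Polynomial.X - Polynomial.C a) := by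
      rw [mem_Rg_lin_iff]
      exact hM
    exact Rg_mem_of_taylor _ this
  have hsub' : IsOmegaSub lam β (Rg (Polynomial.X - Polynomial.C a))
      (Rg (Polynomial.X - Polynomial.C a)) := isOmegaSub_Rg lam β _
  have hne' : ((Rg (Polynomial.X - Polynomial.C a), Rg (Polynomial.X - Polynomial.C a))
      : Submodule ℂ P2 × Submodule ℂ P2) ≠ ⊤ := by
    intro htop
    have : Rg (Polynomial.X - Polynomial.C a) = ⊤ := congrArg Prod.fst htop
    exact one_not_mem_Rg_lin a (this ▸ Submodule.mem_top)
  have := hmax (Rg (Polynomial.X - Polynomial.C a), Rg (Polynomial.X - Polynomial.C a))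
    hsub' ⟨hF1le, hF2le⟩ hne'
  exact ⟨Polynomial.X - Polynomial.C a, Polynomial.natDegree_X_sub_C a, this.symm⟩
-- ### the map Φ and its properties

/-- `Φ d c = ∑ i, c i (x) · y^i` -/
def Phi (d : ℕ) (c : Fin d → Polynomial ℂ) : P2 :=
  ∑ i : Fin d, embX (c i) * Polynomial.C (Polynomial.X ^ (i : ℕ))

lemma Phi_coeff (d : ℕ) (c : Fin d → Polynomial ℂ) (k : ℕ) :
    (Phi d c).coeff k
      = ∑ i : Fin d, Polynomial.C ((c i).coeff k) * Polynomial.X ^ (i : ℕ) := by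
  rw [Phi, Polynomial.finset_sum_coeff]
  refine Finset.sum_congr rfl fun i _ => ?_
  rw [Polynomial.coeff_mul_C, embX, Polynomial.coeff_map]

lemma Phi_sub (d : ℕ) (c c' : Fin d → Polynomial ℂ) :
    Phi d c - Phi d c' = Phi d (c - c') := by
  rw [Phi, Phi, Phi, ← Finset.sum_sub_distrib]
  refine Finset.sum_congr rfl fun i _ => ?_
  rw [Pi.sub_apply, embX, embX, embX, Polynomial.map_sub, sub_mul]

lemma Phi_inj {h : Polynomial ℂ} (hh : h ≠ 0) {d : ℕ} (hd : d = h.natDegree)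
    (c : Fin d → Polynomial ℂ) (hmem : Phi d c ∈ Rg h) : c = 0 := by
  obtain ⟨q, hq⟩ := mem_Rg.1 hmem
  have key : ∀ k, ∀ i : Fin d, (c i).coeff k = 0 := by
    intro k i
    have hk : (∑ j : Fin d, Polynomial.C ((c j).coeff k) * Polynomial.X ^ (j : ℕ))
        = h * q.coeff k := by
      rw [← Phi_coeff, ← hq, Polynomial.coeff_C_mul]
    have hdegr : (∑ j : Fin d, Polynomial.C ((c j).coeff k) * Polynomial.X ^ (j : ℕ)).degree
        < (d : WithBot ℕ) := by
      refine lt_of_le_of_lt (Polynomial.degree_sum_le _ _) ?_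
      rw [Finset.sup_lt_iff (by exact_mod_cast WithBot.bot_lt_coe d)]
      intro j _
      refine lt_of_le_of_lt (Polynomial.degree_mul_le _ _) ?_
      have h1 := Polynomial.degree_C_le (a := (c j).coeff k)
      have h2 := Polynomial.degree_X_pow_le (R := ℂ) (j : ℕ)
      calc (Polynomial.C ((c j).coeff k)).degree + (Polynomial.X ^ (j:ℕ) : Polynomial ℂ).degree
          ≤ 0 + ((j : ℕ) : WithBot ℕ) := add_le_add h1 h2
        _ = ((j : ℕ) : WithBot ℕ) := zero_add _
        _ < (d : WithBot ℕ) := by exact_mod_cast j.2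
    have hq0 : q.coeff k = 0 := by
      by_contra hne
      have := Polynomial.degree_mul (p := h) (q := q.coeff k)
      rw [← hk] at this
      have h1 : (d : WithBot ℕ) ≤ h.degree := by
        rw [Polynomial.degree_eq_natDegree hh, hd]
      have h2 : (0 : WithBot ℕ) ≤ (q.coeff k).degree := by
        exact Polynomial.zero_le_degree_iff.2 hne
      have : (d : WithBot ℕ) ≤ (∑ j : Fin d, Polynomial.C ((c j).coeff k) * Polynomial.X ^ (j : ℕ)).degree := by
        rw [this]
        calc (d : WithBot ℕ) = (d : WithBot ℕ) + 0 := by rw [add_zero]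
        _ ≤ h.degree + (q.coeff k).degree := add_le_add h1 h2
      exact absurd hdegr (not_lt.2 this)
    rw [hq0, mul_zero] at hk
    have := congrArg (fun r => Polynomial.coeff r (i : ℕ)) hk
    simp only [Polynomial.finset_sum_coeff, Polynomial.coeff_C_mul, Polynomial.coeff_X_pow,
      Polynomial.coeff_zero] at this
    rw [Finset.sum_eq_single i] at this
    · simpa using this
    · intro j _ hji
      rw [if_neg (fun hh' : (i:ℕ) = (j:ℕ) => hji (Fin.ext hh'.symm)), mul_zero]
    · intro hi; exact absurd (Finset.mem_univ i) hi
  funext i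
  exact Polynomial.ext fun k => key k i

lemma Phi_surj {h : Polynomial ℂ} (hmonic : h.Monic) {d : ℕ} (hd : d = h.natDegree) (p : P2) :
    ∃ c : Fin d → Polynomial ℂ, p - Phi d c ∈ Rg h := by
  classical
  refine ⟨fun i => ∑ k ∈ p.support, Polynomial.C ((p.coeff k %ₘ h).coeff (i : ℕ))
    * Polynomial.X ^ k, ?_⟩
  have hPhi : Phi d (fun i => ∑ k ∈ p.support, Polynomial.C ((p.coeff k %ₘ h).coeff (i : ℕ))
      * Polynomial.X ^ k) = ∑ k ∈ p.support, Polynomial.C (p.coeff k %ₘ h) * Polynomial.X ^ k := by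
    rw [Phi]
    have : ∀ i : Fin d,
        embX (∑ k ∈ p.support, Polynomial.C ((p.coeff k %ₘ h).coeff (i : ℕ)) * Polynomial.X ^ k)
          * Polynomial.C (Polynomial.X ^ (i:ℕ))
        = ∑ k ∈ p.support, (Polynomial.C (Polynomial.C ((p.coeff k %ₘ h).coeff (i : ℕ))
            * Polynomial.X ^ (i:ℕ)) * Polynomial.X ^ k) := by
      intro i
      rw [embX, Polynomial.map_sum, Finset.sum_mul]
      refine Finset.sum_congr rfl fun k _ => ?_
      rw [Polynomial.map_mul, Polynomial.map_pow, Polynomial.map_C, Polynomial.map_X, map_mul]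
      ring
    rw [Finset.sum_congr rfl fun i _ => this i, Finset.sum_comm]
    refine Finset.sum_congr rfl fun k hk => ?_
    rw [← Finset.sum_mul, ← map_sum]
    congr 2
    have hdeg : (p.coeff k %ₘ h).degree < (d : WithBot ℕ) := by
      rw [hd, ← Polynomial.degree_eq_natDegree hmonic.ne_zero]
      exact Polynomial.degree_modByMonic_lt _ hmonic
    have := Polynomial.sum_fin (fun i a => Polynomial.C a * Polynomial.X ^ i)
      (fun i => by simp) hdeg
    rw [this, Polynomial.sum_C_mul_X_pow_eq]
  rw [hPhi]
  refine mem_Rg.2 ⟨∑ k ∈ p.support, Polynomial.C (p.coeff k /ₘ h) * Polynomial.X ^ k, ?_⟩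
  rw [Finset.mul_sum, eq_sub_iff_add_eq, ← Finset.sum_add_distrib]
  conv_rhs => rw [Polynomial.as_sum_support p]
  refine Finset.sum_congr rfl fun k _ => ?_
  rw [← Polynomial.C_mul_X_pow_eq_monomial, ← mul_assoc, ← map_mul, ← add_mul, ← map_add]
  have hmd := Polynomial.modByMonic_add_div (p.coeff k) h
  rw [show h * (p.coeff k /ₘ h) + p.coeff k %ₘ h = p.coeff k from by linear_combination hmd]
lemma part1 (lam : ℂ) (hlam : lam ≠ 0) (β g : Polynomial ℂ) (hg : g ≠ 0)
    (T : Module.End ℂ ((P2 ⧸ Rg g) × (P2 ⧸ Rg g)))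
    (hT : ∀ a : P2 × P2,
      T ((Rg g).mkQ a.1, (Rg g).mkQ a.2)
        = ((Rg g).mkQ (omegaLe lam β 0 a.1), (Rg g).mkQ (omegaLo lam β 0 a.2))) :
    ∃ v : Fin (2 * g.natDegree) → (P2 ⧸ Rg g) × (P2 ⧸ Rg g),
      Function.Bijective (fun c : Fin (2 * g.natDegree) → Polynomial ℂ =>
        ∑ i, (Polynomial.aeval T (c i)) (v i)) := by
  classical
  set h := g * Polynomial.C g.leadingCoeff⁻¹ with hh
  have hmonic : h.Monic := Polynomial.monic_mul_leadingCoeff_inv hg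
  have hcne : (g.leadingCoeff)⁻¹ ≠ 0 := inv_ne_zero (Polynomial.leadingCoeff_ne_zero.2 hg)
  have hRgh : Rg g = Rg h := Rg_smul_unit _ hcne
  set d := g.natDegree with hdd
  have hd' : d = h.natDegree := by
    rw [hh, Polynomial.natDegree_mul_C hcne]
  have hLe0 : ∀ f : P2, omegaLe lam β 0 f = xP * f := fun f => by
    simp [omegaLe_apply]
  have hLo0 : ∀ f : P2, omegaLo lam β 0 f = xP * f := fun f => by
    simp [omegaLo_apply]
  have K1 : ∀ (p : Polynomial ℂ) (a b : P2),
      (Polynomial.aeval T p) ((Rg g).mkQ a, (Rg g).mkQ b)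
        = ((Rg g).mkQ (embX p * a), (Rg g).mkQ (embX p * b)) := by
    intro p
    induction p using Polynomial.induction_on with
    | C r =>
      intro a b
      rw [Polynomial.aeval_C, Module.algebraMap_end_apply, embX, Polynomial.map_C, Prod.smul_mk]
      congr 1
      · rw [← csmul, ← map_smul]
      · rw [← csmul, ← map_smul]
    | add p q hp hq =>
      intro a b
      have he : embX (p + q) = embX p + embX q := Polynomial.map_add _
      rw [map_add, LinearMap.add_apply, hp, hq, Prod.mk_add_mk, he, add_mul, add_mul,
        map_add, map_add]
    | monomial n r ih =>
      intro a b
      have e1 : Polynomial.C r * Polynomial.X ^ (n+1)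
          = (Polynomial.C r * Polynomial.X ^ n) * Polynomial.X := by ring
      rw [e1, map_mul, Polynomial.aeval_X, Module.End.mul_apply]
      have hTab := hT (a, b)
      rw [hTab, hLe0, hLo0, ih]
      have e2 : embX ((Polynomial.C r * Polynomial.X ^ n) * Polynomial.X)
          = embX (Polynomial.C r * Polynomial.X ^ n) * Polynomial.X := by
        simp only [embX, Polynomial.map_mul, Polynomial.map_X]
      rw [e2]
      congr 1 <;> · congr 1; rw [xP]; ring
  let e : Fin d ⊕ Fin d ≃ Fin (2*d) := finSumFinEquiv.trans (finCongr (two_mul d).symm)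
  let base : Fin d ⊕ Fin d → (P2 ⧸ Rg g) × (P2 ⧸ Rg g) :=
    Sum.elim (fun j => ((Rg g).mkQ (Polynomial.C (Polynomial.X ^ (j:ℕ))), 0))
             (fun j => (0, (Rg g).mkQ (Polynomial.C (Polynomial.X ^ (j:ℕ)))))
  refine ⟨fun i => base (e.symm i), ?_⟩
  let ψ0 : (Fin d → Polynomial ℂ) → (P2 ⧸ Rg g) := fun c => (Rg g).mkQ (Phi d c)
  have hψbij : Function.Bijective ψ0 := by
    constructor
    · intro c c' hcc
      have hmem : Phi d c - Phi d c' ∈ Rg g := (Submodule.Quotient.eq _).1 hcc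
      rw [Phi_sub, hRgh] at hmem
      have hz := Phi_inj hmonic.ne_zero hd' (c - c') hmem
      exact sub_eq_zero.1 hz
    · intro z
      obtain ⟨p, rfl⟩ := (Rg g).mkQ_surjective z
      obtain ⟨c, hc⟩ := Phi_surj hmonic hd' p
      refine ⟨c, (Submodule.Quotient.eq _).2 ?_⟩
      rw [hRgh]
      have := (Rg h).neg_mem hc
      rwa [neg_sub] at this
  let E : (Fin (2*d) → Polynomial ℂ) ≃ (Fin d → Polynomial ℂ) × (Fin d → Polynomial ℂ) :=
    (Equiv.arrowCongr e.symm (Equiv.refl _)).trans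
      (Equiv.sumArrowEquivProdArrow (Fin d) (Fin d) (Polynomial ℂ))
  have hexpr : (fun c : Fin (2*d) → Polynomial ℂ =>
        ∑ i, (Polynomial.aeval T (c i)) (base (e.symm i)))
      = (Prod.map ψ0 ψ0) ∘ E := by
    funext c
    rw [← Equiv.sum_comp e (fun i => (Polynomial.aeval T (c i)) (base (e.symm i)))]
    simp only [Equiv.symm_apply_apply]
    rw [Fintype.sum_sum_type]
    have hA : ∀ j : Fin d, (Polynomial.aeval T (c (e (Sum.inl j)))) (base (Sum.inl j))
        = ((Rg g).mkQ (embX (c (e (Sum.inl j))) * Polynomial.C (Polynomial.X ^ (j:ℕ))),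
            (0 : P2 ⧸ Rg g)) := by
      intro j
      show (Polynomial.aeval T (c (e (Sum.inl j))))
          ((Rg g).mkQ (Polynomial.C (Polynomial.X ^ (j:ℕ))), 0) = _
      rw [show (0 : P2 ⧸ Rg g) = (Rg g).mkQ 0 from (map_zero _).symm, K1, mul_zero]
    have hB : ∀ j : Fin d, (Polynomial.aeval T (c (e (Sum.inr j)))) (base (Sum.inr j))
        = ((0 : P2 ⧸ Rg g),
            (Rg g).mkQ (embX (c (e (Sum.inr j))) * Polynomial.C (Polynomial.X ^ (j:ℕ)))) := by
      intro j
      show (Polynomial.aeval T (c (e (Sum.inr j))))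
          (0, (Rg g).mkQ (Polynomial.C (Polynomial.X ^ (j:ℕ)))) = _
      rw [show (0 : P2 ⧸ Rg g) = (Rg g).mkQ 0 from (map_zero _).symm, K1, mul_zero]
    rw [Finset.sum_congr rfl (fun j _ => hA j), Finset.sum_congr rfl (fun j _ => hB j)]
    have h1 : (∑ j : Fin d, ((Rg g).mkQ (embX (c (e (Sum.inl j))) * Polynomial.C (Polynomial.X ^ (j:ℕ))),
          (0 : P2 ⧸ Rg g)))
        = ((ψ0 fun j => c (e (Sum.inl j))), 0) := by
      rw [Prod.ext_iff]
      constructor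
      · rw [Prod.fst_sum]
        show _ = (Rg g).mkQ (Phi d _)
        rw [Phi, map_sum]
      · rw [Prod.snd_sum]
        simp
    have h2 : (∑ j : Fin d, ((0 : P2 ⧸ Rg g),
          (Rg g).mkQ (embX (c (e (Sum.inr j))) * Polynomial.C (Polynomial.X ^ (j:ℕ)))))
        = (0, (ψ0 fun j => c (e (Sum.inr j)))) := by
      rw [Prod.ext_iff]
      constructor
      · rw [Prod.fst_sum]
        simp
      · rw [Prod.snd_sum]
        show _ = (Rg g).mkQ (Phi d _)
        rw [Phi, map_sum]
    rw [h1, h2, Prod.mk_add_mk, add_zero, zero_add]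
    show _ = (ψ0 (E c).1, ψ0 (E c).2)
    have hE : E c = (fun j => c (e (Sum.inl j)), fun j => c (e (Sum.inr j))) := by
      simp only [E, Equiv.trans_apply, Equiv.arrowCongr_apply, Equiv.sumArrowEquivProdArrow,
        Equiv.coe_fn_mk, Equiv.refl_apply, Equiv.symm_symm, Function.comp_apply]
      rfl
    rw [hE]
  rw [hexpr]
  exact (hψbij.prodMap hψbij).comp E.bijective
/-- For `g ≠ 0`, the quotient `Ω(λ,β)/R_g` is a free module of rank
`2·deg g` over `ℂ[z]`, where `z` acts as the operator `T` induced by `L₀`; and if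
`β(0) ≠ 0`, every maximal submodule of `Ω(λ,β)` is `R_g` for some `g` of degree `1`. -/
theorem statement9 (lam : ℂ) (hlam : lam ≠ 0) (β : Polynomial ℂ)
    (g : Polynomial ℂ) (hg : g ≠ 0) :
    (∀ T : Module.End ℂ ((P2 ⧸ Rg g) × (P2 ⧸ Rg g)),
      (∀ a : P2 × P2,
        T ((Rg g).mkQ a.1, (Rg g).mkQ a.2)
          = ((Rg g).mkQ (omegaLe lam β 0 a.1), (Rg g).mkQ (omegaLo lam β 0 a.2))) →
      ∃ v : Fin (2 * g.natDegree) → (P2 ⧸ Rg g) × (P2 ⧸ Rg g),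
        Function.Bijective (fun c : Fin (2 * g.natDegree) → Polynomial ℂ =>
          ∑ i, (Polynomial.aeval T (c i)) (v i))) ∧
    (β.eval 0 ≠ 0 →
      ∀ F : Submodule ℂ P2 × Submodule ℂ P2,
        IsOmegaSub lam β F.1 F.2 → F ≠ ⊤ →
        (∀ F' : Submodule ℂ P2 × Submodule ℂ P2,
          IsOmegaSub lam β F'.1 F'.2 → F ≤ F' → F' ≠ ⊤ → F' = F) →
        ∃ g' : Polynomial ℂ, g'.natDegree = 1 ∧ F = (Rg g', Rg g')) := by
  refine ⟨fun T hT => part1 lam hlam β g hg T hT, fun hβ0 F hsub hne hmax =>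
    part2 lam hlam β hβ0 F hsub hne hmax⟩
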